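/- arXiv:2208.03478 — 3 statements merged into one kernel-verified Lean document; each statement's English description precedes it below -/
import Mathlib

section
/- Let (B_k)_{k∈ℕ} be a nonnegative stochastic process adapted to a filtration, and suppose there exist constants 0 < κ < 1 and γ ≥ 0 such that E[B_{k+1} | F_k] ≤ κ B_k + γ for all k. Then for any η ≥ γ/(1−κ), any time horizon T ∈ ℕ, and any initial value B_0 = b ≤ α, the probability that sup_{0 ≤ k ≤ T} B_k ≥ η is at most 1 − (1 − α/η)(1 − γ/η)^T. -/
/-!
Let `A k` be the event that `B` stays below `η` up to time `k`, and `q = 1 - γ / η`. The quantity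
`V k = ∫_{A k} (η - B k)` satisfies `V 0 ≥ η - α` and `V (k + 1) ≥ q * V k`: on `A k` the drift
condition gives `η - E[B (k+1) | ℱ k] ≥ q * (η - B k)` because `q * η = η - γ` and `κ ≤ q`, and
shrinking `A k` to `A (k + 1)` only discards the part where `η - B (k + 1) ≤ 0`. Hence
`η * P(A T) ≥ V T ≥ (η - α) * q ^ T`, which is the bound for the complement `(A T)ᶜ`.
-/

open MeasureTheory

section SetIntegral

variable {Ω : Type*} {m0 : MeasurableSpace Ω} {μ : Measure Ω}

theorem setIntegral_le_setIntegral_inter {g : Ω → ℝ} {s t : Set Ω} (hs : MeasurableSet s)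
    (ht : MeasurableSet t) (hg : IntegrableOn g s μ) (hnonpos : ∀ ω ∈ s \ t, g ω ≤ 0) :
    ∫ ω in s, g ω ∂μ ≤ ∫ ω in s ∩ t, g ω ∂μ := by
  rw [← integral_inter_add_sdiff ht hg]
  linarith [setIntegral_nonpos (μ := μ) (hs.diff ht) hnonpos]

theorem setIntegral_le_of_condExp_le {m : MeasurableSpace Ω} (hm : m ≤ m0)
    [SigmaFinite (μ.trim hm)] {f g : Ω → ℝ} {s : Set Ω} (hs : MeasurableSet[m] s)
    (hf : Integrable f μ) (hg : Integrable g μ) (hfg : μ[f | m] ≤ᵐ[μ] g) :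
    ∫ ω in s, f ω ∂μ ≤ ∫ ω in s, g ω ∂μ := by
  rw [← setIntegral_condExp hm hf hs]
  exact setIntegral_mono_ae integrable_condExp.integrableOn hg.integrableOn hfg

end SetIntegral

section StaysBelow

variable {Ω : Type*} {m0 : MeasurableSpace Ω} {μ : Measure Ω} {B : ℕ → Ω → ℝ} {η : ℝ}

def staysBelow (B : ℕ → Ω → ℝ) (η : ℝ) (k : ℕ) : Set Ω := {ω | ∀ j ≤ k, B j ω < η}

theorem staysBelow_zero : staysBelow B η 0 = {ω | B 0 ω < η} := by
  simp [staysBelow]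

theorem staysBelow_succ (k : ℕ) :
    staysBelow B η (k + 1) = staysBelow B η k ∩ {ω | B (k + 1) ω < η} := by
  ext ω
  simp [staysBelow, Nat.le_succ_iff, or_imp, forall_and]

theorem compl_staysBelow (k : ℕ) : (staysBelow B η k)ᶜ = {ω | ∃ j ≤ k, η ≤ B j ω} := by
  ext ω
  simp [staysBelow]

theorem measurableSet_staysBelow {ℱ : Filtration ℕ m0} (hB : Adapted ℱ B) (k : ℕ) :
    MeasurableSet[ℱ k] (staysBelow B η k) := by
  induction k with
  | zero =>
    rw [staysBelow_zero]
    exact measurableSet_lt (hB 0) measurable_const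
  | succ k ih =>
    rw [staysBelow_succ]
    exact (ℱ.mono k.le_succ _ ih).inter (measurableSet_lt (hB _) measurable_const)

variable {ℱ : Filtration ℕ m0} {κ γ q : ℝ}

theorem mul_setIntegral_staysBelow_le_succ [IsFiniteMeasure μ] (hnonneg : ∀ k ω, 0 ≤ B k ω)
    (hadapted : Adapted ℱ B) (hint : ∀ k, Integrable (B k) μ)
    (hcond : ∀ k, μ[B (k + 1) | ℱ k] ≤ᵐ[μ] fun ω => κ * B k ω + γ)
    (hκq : κ ≤ q) (hqη : q * η ≤ η - γ) (k : ℕ) :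
    q * ∫ ω in staysBelow B η k, (η - B k ω) ∂μ ≤
      ∫ ω in staysBelow B η (k + 1), (η - B (k + 1) ω) ∂μ := by
  set A := staysBelow B η k
  have hA : MeasurableSet[ℱ k] A := measurableSet_staysBelow hadapted k
  have hdrift : Integrable (fun ω => κ * B k ω + γ) μ :=
    ((hint k).const_mul κ).add (integrable_const γ)
  calc q * ∫ ω in A, (η - B k ω) ∂μ = ∫ ω in A, q * (η - B k ω) ∂μ :=
        (integral_const_mul q _).symm
    _ ≤ ∫ ω in A, (η - (κ * B k ω + γ)) ∂μ := by
        refine setIntegral_mono_on (((integrable_const η).sub (hint k)).const_mul q).integrableOn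
          ((integrable_const η).sub hdrift).integrableOn (ℱ.le k _ hA) fun ω _ => ?_
        nlinarith [mul_le_mul_of_nonneg_right hκq (hnonneg k ω)]
    _ = ∫ ω in A, η ∂μ - ∫ ω in A, (κ * B k ω + γ) ∂μ :=
        integral_sub (integrable_const η).integrableOn hdrift.integrableOn
    _ ≤ ∫ ω in A, η ∂μ - ∫ ω in A, B (k + 1) ω ∂μ :=
        sub_le_sub_left (setIntegral_le_of_condExp_le (ℱ.le k) hA (hint _) hdrift (hcond k)) _
    _ = ∫ ω in A, (η - B (k + 1) ω) ∂μ :=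
        (integral_sub (integrable_const η).integrableOn (hint _).integrableOn).symm
    _ ≤ ∫ ω in staysBelow B η (k + 1), (η - B (k + 1) ω) ∂μ := by
        rw [staysBelow_succ]
        refine setIntegral_le_setIntegral_inter (ℱ.le k _ hA)
          (measurableSet_lt ((hadapted _).mono (ℱ.le _) le_rfl) measurable_const)
          ((integrable_const η).sub (hint _)).integrableOn fun ω hω => ?_
        simpa using hω.2

theorem geom_le_setIntegral_staysBelow [IsProbabilityMeasure μ] {α : ℝ}
    (hnonneg : ∀ k ω, 0 ≤ B k ω) (hadapted : Adapted ℱ B) (hint : ∀ k, Integrable (B k) μ)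
    (hcond : ∀ k, μ[B (k + 1) | ℱ k] ≤ᵐ[μ] fun ω => κ * B k ω + γ)
    (hB0 : ∀ ω, B 0 ω ≤ α) (hκq : κ ≤ q) (hqη : q * η ≤ η - γ) (hq0 : 0 ≤ q) (k : ℕ) :
    (η - α) * q ^ k ≤ ∫ ω in staysBelow B η k, (η - B k ω) ∂μ := by
  induction k with
  | zero =>
    have hB0m : Measurable (B 0) := (hadapted 0).mono (ℱ.le 0) le_rfl
    calc (η - α) * q ^ 0 = ∫ _ω, (η - α) ∂μ := by simp
      _ ≤ ∫ ω, (η - B 0 ω) ∂μ :=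
          integral_mono (integrable_const _) ((integrable_const η).sub (hint 0))
            fun ω => by linarith [hB0 ω]
      _ ≤ ∫ ω in Set.univ ∩ {ω | B 0 ω < η}, (η - B 0 ω) ∂μ := by
          rw [← setIntegral_univ]
          refine setIntegral_le_setIntegral_inter MeasurableSet.univ
            (measurableSet_lt hB0m measurable_const)
            ((integrable_const η).sub (hint 0)).integrableOn fun ω hω => ?_
          simpa using hω.2
      _ = ∫ ω in staysBelow B η 0, (η - B 0 ω) ∂μ := by rw [Set.univ_inter, staysBelow_zero]
  | succ k ih =>
    calc (η - α) * q ^ (k + 1) = q * ((η - α) * q ^ k) := by ring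
      _ ≤ q * ∫ ω in staysBelow B η k, (η - B k ω) ∂μ := mul_le_mul_of_nonneg_left ih hq0
      _ ≤ _ := mul_setIntegral_staysBelow_le_succ hnonneg hadapted hint hcond hκq hqη k

end StaysBelow

theorem kushner_bound_case1_general {Ω : Type*} {m0 : MeasurableSpace Ω} {μ : Measure Ω}
    [IsProbabilityMeasure μ] (ℱ : Filtration ℕ m0)
    (B : ℕ → Ω → ℝ)
    (hnonneg : ∀ k ω, 0 ≤ B k ω)
    (hadapted : Adapted ℱ B)
    (hint : ∀ k, Integrable (B k) μ)
    (κ γ α η : ℝ) (hκ0 : 0 < κ) (hκ1 : κ < 1)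
    (hη0 : 0 < η) (hη : γ / (1 - κ) ≤ η)
    (hcond : ∀ k, μ[B (k + 1) | ℱ k] ≤ᵐ[μ] fun ω => κ * B k ω + γ)
    (hB0 : ∀ ω, B 0 ω ≤ α)
    (T : ℕ) :
    (μ {ω | ∃ k ≤ T, η ≤ B k ω}).toReal ≤ 1 - (1 - α / η) * (1 - γ / η) ^ T := by
  set q := 1 - γ / η
  have hγη : γ ≤ η * (1 - κ) := (div_le_iff₀ (by linarith)).mp (by linarith)
  have hqη : q * η = η - γ := by simp only [q]; field_simp
  have hκq : κ ≤ q := by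
    have : γ / η ≤ 1 - κ := (div_le_iff₀ hη0).mpr (by linarith)
    linarith
  set A := staysBelow B η T
  have hgeom := geom_le_setIntegral_staysBelow hnonneg hadapted hint hcond hB0 hκq hqη.le
    (hκ0.le.trans hκq) T
  have hV : ∫ ω in A, (η - B T ω) ∂μ ≤ η * μ.real A := by
    calc ∫ ω in A, (η - B T ω) ∂μ ≤ ∫ _ω in A, η ∂μ :=
          setIntegral_mono ((integrable_const η).sub (hint T)).integrableOn
            (integrable_const η).integrableOn fun ω => by linarith [hnonneg T ω]
      _ = η * μ.real A := by rw [setIntegral_const, smul_eq_mul, mul_comm]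
  have hPA : (1 - α / η) * q ^ T ≤ μ.real A := by
    refine le_of_mul_le_mul_left ?_ hη0
    calc η * ((1 - α / η) * q ^ T) = (η - α) * q ^ T := by field_simp
      _ ≤ η * μ.real A := hgeom.trans hV
  rw [← compl_staysBelow, ← measureReal_def,
    probReal_compl_eq_one_sub (ℱ.le T _ (measurableSet_staysBelow hadapted T))]
  linarith

theorem kushner_bound_case1 {Ω : Type*} {m0 : MeasurableSpace Ω} {μ : Measure Ω}
    [IsProbabilityMeasure μ] (ℱ : Filtration ℕ m0)
    (B : ℕ → Ω → ℝ)
    (hnonneg : ∀ k ω, 0 ≤ B k ω)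
    (hadapted : Adapted ℱ B)
    (hint : ∀ k, Integrable (B k) μ)
    (κ γ α η : ℝ) (hκ0 : 0 < κ) (hκ1 : κ < 1) (hγ : 0 ≤ γ) (hα : 0 ≤ α)
    (hη0 : 0 < η) (hη : γ / (1 - κ) ≤ η)
    (hcond : ∀ k, μ[B (k + 1) | ℱ k] ≤ᵐ[μ] fun ω => κ * B k ω + γ)
    (hB0 : ∀ ω, B 0 ω ≤ α)
    (T : ℕ) :
    (μ {ω | ∃ k ≤ T, η ≤ B k ω}).toReal ≤ 1 - (1 - α / η) * (1 - γ / η) ^ T :=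
  kushner_bound_case1_general ℱ B hnonneg hadapted hint κ γ α η hκ0 hκ1 hη0 hη hcond hB0 T
end

section
/- Let (B_k)_{k∈ℕ} be a nonnegative stochastic process adapted to a filtration, and suppose there exist constants 0 < κ < 1 and γ ≥ 0 such that E[B_{k+1} | F_k] ≤ κ B_k + γ for all k. Then for any 0 < η < γ/(1−κ), any time horizon T ∈ ℕ, and any initial value B_0 = b ≤ α, the probability that sup_{0 ≤ k ≤ T} B_k ≥ η is at most (α/η)κ^T + (γ/((1−κ)η))(1 − κ^T). -/
/-!
With `N k = κ ^ (T - k) * B (min k T) + γ * (1 + κ + ⋯ + κ ^ (T - k - 1))`, the drift condition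
makes `N` a nonnegative supermartingale, and `η * (1 - κ) ≤ γ` makes `N k ≥ η` whenever
`B k ≥ η`. Stopping `N` when it first reaches `η` before `T`, optional stopping and Markov's
inequality give `η * P(∃ k ≤ T, B k ≥ η) ≤ E[N 0] ≤ κ ^ T * α + γ * (1 - κ ^ T) / (1 - κ)`.
-/

open MeasureTheory Finset

namespace MeasureTheory

variable {Ω : Type*} {m0 : MeasurableSpace Ω} {μ : Measure Ω} {ℱ : Filtration ℕ m0}
  {f : ℕ → Ω → ℝ}

theorem supermartingale_min_of_condExp_le [IsFiniteMeasure μ] (hadp : StronglyAdapted ℱ f)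
    (hint : ∀ k, Integrable (f k) μ) {n : ℕ} (hf : ∀ k < n, μ[f (k + 1) | ℱ k] ≤ᵐ[μ] f k) :
    Supermartingale (fun k => f (min k n)) ℱ μ := by
  have hadp_min : ∀ k, StronglyMeasurable[ℱ k] (f (min k n)) :=
    fun k => (hadp _).mono (ℱ.mono (min_le_left k n))
  refine supermartingale_nat hadp_min (fun k => hint _) fun k => ?_
  rcases lt_or_ge k n with hk | hk
  · rw [min_eq_left hk, min_eq_left hk.le]
    exact hf k hk
  · rw [show min (k + 1) n = min k n by omega,
      condExp_of_stronglyMeasurable (ℱ.le k) (hadp_min k) (hint _)]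

theorem Supermartingale.mul_measureReal_exists_le_le_integral [IsFiniteMeasure μ]
    (hf : Supermartingale f ℱ μ) (hnonneg : 0 ≤ f) {ε : ℝ} (hε : 0 ≤ ε) (n : ℕ) :
    ε * μ.real {ω | ∃ k ≤ n, ε ≤ f k ω} ≤ ∫ ω, f 0 ω ∂μ := by
  set τ : Ω → ℕ∞ := fun ω => (hittingBtwn f {y | ε ≤ y} 0 n ω : ℕ)
  have hτ : IsStoppingTime ℱ τ :=
    hf.stronglyAdapted.adapted.isStoppingTime_hittingBtwn measurableSet_Ici
  have hτle : ∀ ω, τ ω ≤ n := fun ω => WithTop.coe_le_coe.mpr (hittingBtwn_le ω)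
  have hsub : {ω | ∃ k ≤ n, ε ≤ f k ω} ⊆ {ω | ε ≤ stoppedValue f τ ω} :=
    fun ω ⟨k, hk, hkω⟩ => stoppedValue_hittingBtwn_mem ⟨k, ⟨k.zero_le, hk⟩, hkω⟩
  have hstop : ∫ ω, stoppedValue f τ ω ∂μ ≤ ∫ ω, f 0 ω ∂μ := by
    have := hf.neg.expected_stoppedValue_mono (isStoppingTime_const ℱ 0) hτ
      (fun _ => zero_le) hτle
    simpa [stoppedValue, integral_neg] using this
  calc ε * μ.real {ω | ∃ k ≤ n, ε ≤ f k ω}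
      ≤ ε * μ.real {ω | ε ≤ stoppedValue f τ ω} :=
      mul_le_mul_of_nonneg_left (measureReal_mono hsub) hε
    _ ≤ ∫ ω, stoppedValue f τ ω ∂μ :=
      mul_meas_ge_le_integral_of_nonneg (.of_forall fun ω => hnonneg _ ω)
        (integrable_stoppedValue ℕ hτ hf.integrable hτle) ε
    _ ≤ ∫ ω, f 0 ω ∂μ := hstop

end MeasureTheory

section Kushner

variable {Ω : Type*} {m0 : MeasurableSpace Ω} {μ : Measure Ω} {ℱ : Filtration ℕ m0}
  {B : ℕ → Ω → ℝ} {κ γ : ℝ} {T : ℕ}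

theorem le_pow_mul_add_mul_geom_sum {κ γ η b : ℝ} (hκ : 0 ≤ κ) (hηγ : η * (1 - κ) ≤ γ)
    (hb : η ≤ b) (m : ℕ) : η ≤ κ ^ m * b + γ * ∑ j ∈ range m, κ ^ j := by
  have hsum : 0 ≤ ∑ j ∈ range m, κ ^ j := sum_nonneg fun j _ => pow_nonneg hκ j
  calc η = κ ^ m * η + η * (1 - κ) * ∑ j ∈ range m, κ ^ j := by
        rw [mul_assoc, mul_neg_geom_sum]; ring
    _ ≤ κ ^ m * b + γ * ∑ j ∈ range m, κ ^ j := by gcongr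

def kushnerProcess (B : ℕ → Ω → ℝ) (κ γ : ℝ) (T k : ℕ) (ω : Ω) : ℝ :=
  κ ^ (T - k) * B k ω + γ * ∑ j ∈ range (T - k), κ ^ j

theorem kushnerProcess_nonneg (hB : ∀ k ω, 0 ≤ B k ω) (hκ : 0 ≤ κ) (hγ : 0 ≤ γ)
    (k : ℕ) (ω : Ω) :
    0 ≤ kushnerProcess B κ γ T k ω := by
  unfold kushnerProcess
  have := hB k ω
  positivity

theorem integral_kushnerProcess_zero_le [IsProbabilityMeasure μ] {α : ℝ}
    (hint : Integrable (B 0) μ) (hκ : 0 ≤ κ) (hB0 : ∀ ω, B 0 ω ≤ α) :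
    ∫ ω, kushnerProcess B κ γ T 0 ω ∂μ ≤ κ ^ T * α + γ * ∑ j ∈ range T, κ ^ j := by
  have hB0int : ∫ ω, B 0 ω ∂μ ≤ α := by
    simpa using integral_mono hint (integrable_const α) hB0
  simp only [kushnerProcess, Nat.sub_zero]
  rw [integral_add (hint.const_mul _) (integrable_const _), integral_const_mul]
  simp only [integral_const, probReal_univ, one_smul]
  gcongr

theorem condExp_kushnerProcess_succ_le [IsFiniteMeasure μ] (hκ : 0 ≤ κ) {k : ℕ} (hk : k < T)
    (hint : Integrable (B (k + 1)) μ)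
    (hcond : μ[B (k + 1) | ℱ k] ≤ᵐ[μ] fun ω => κ * B k ω + γ) :
    μ[kushnerProcess B κ γ T (k + 1) | ℱ k] ≤ᵐ[μ] kushnerProcess B κ γ T k := by
  obtain ⟨m, rfl⟩ : ∃ m, T = k + 1 + m := ⟨T - (k + 1), by omega⟩
  have hm₁ : k + 1 + m - (k + 1) = m := by omega
  have hm₂ : k + 1 + m - k = m + 1 := by omega
  have hsplit : kushnerProcess B κ γ (k + 1 + m) (k + 1) =
      κ ^ m • B (k + 1) + fun _ => γ * ∑ j ∈ range m, κ ^ j := by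
    ext ω; simp [kushnerProcess, hm₁]
  rw [hsplit]
  filter_upwards [condExp_add (hint.smul (κ ^ m)) (integrable_const _) (ℱ k),
    condExp_smul (m := ℱ k) (μ := μ) (κ ^ m) (B (k + 1)), hcond] with ω hadd hsmul hω
  rw [hadd, Pi.add_apply, hsmul, condExp_const (ℱ.le k)]
  simp only [kushnerProcess, hm₂, Pi.smul_apply, smul_eq_mul, sum_range_succ, pow_succ]
  nlinarith [mul_le_mul_of_nonneg_left hω (pow_nonneg hκ m)]

theorem supermartingale_kushnerProcess_min [IsFiniteMeasure μ] (hadp : Adapted ℱ B)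
    (hint : ∀ k, Integrable (B k) μ) (hκ : 0 ≤ κ)
    (hcond : ∀ k, μ[B (k + 1) | ℱ k] ≤ᵐ[μ] fun ω => κ * B k ω + γ) :
    Supermartingale (fun k => kushnerProcess B κ γ T (min k T)) ℱ μ := by
  refine supermartingale_min_of_condExp_le (fun k => ?_) (fun k => ?_)
    fun k hk => condExp_kushnerProcess_succ_le hκ hk (hint _) (hcond k)
  · exact (((hadp k).const_mul _).add_const _).stronglyMeasurable
  · exact ((hint k).const_mul _).add (integrable_const _)

end Kushner

theorem kushner_bound_case2_general {Ω : Type*} {m0 : MeasurableSpace Ω} {μ : Measure Ω}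
    [IsProbabilityMeasure μ] (ℱ : Filtration ℕ m0)
    (B : ℕ → Ω → ℝ)
    (hnonneg : ∀ k ω, 0 ≤ B k ω)
    (hadapted : Adapted ℱ B)
    (hint : ∀ k, Integrable (B k) μ)
    (κ γ α η : ℝ) (hκ0 : 0 < κ) (hκ1 : κ < 1) (hγ : 0 ≤ γ)
    (hη0 : 0 < η) (hη : η < γ / (1 - κ))
    (hcond : ∀ k, μ[B (k + 1) | ℱ k] ≤ᵐ[μ] fun ω => κ * B k ω + γ)
    (hB0 : ∀ ω, B 0 ω ≤ α)
    (T : ℕ) :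
    (μ {ω | ∃ k ≤ T, η ≤ B k ω}).toReal ≤
      (α / η) * κ ^ T + (γ / ((1 - κ) * η)) * (1 - κ ^ T) := by
  have hηγ : η * (1 - κ) ≤ γ := ((lt_div_iff₀ (sub_pos.mpr hκ1)).mp hη).le
  set N := fun k => kushnerProcess B κ γ T (min k T)
  have hsub : {ω | ∃ k ≤ T, η ≤ B k ω} ⊆ {ω | ∃ k ≤ T, η ≤ N k ω} := by
    rintro ω ⟨k, hk, hkω⟩
    exact ⟨k, hk, by simpa [N, kushnerProcess, min_eq_left hk] using
      le_pow_mul_add_mul_geom_sum hκ0.le hηγ hkω (T - k)⟩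
  have hsuper := supermartingale_kushnerProcess_min (T := T) hadapted hint hκ0.le hcond
  have hbound : η * μ.real {ω | ∃ k ≤ T, η ≤ B k ω} ≤
      κ ^ T * α + γ * ∑ j ∈ range T, κ ^ j :=
    calc _ ≤ η * μ.real {ω | ∃ k ≤ T, η ≤ N k ω} :=
          mul_le_mul_of_nonneg_left (measureReal_mono hsub) hη0.le
      _ ≤ ∫ ω, N 0 ω ∂μ := hsuper.mul_measureReal_exists_le_le_integral
          (fun k ω => kushnerProcess_nonneg hnonneg hκ0.le hγ _ ω) hη0.le T
      _ ≤ _ := integral_kushnerProcess_zero_le (hint 0) hκ0.le hB0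
  have hκ1' : 1 - κ ≠ 0 := (sub_pos.mpr hκ1).ne'
  rw [← measureReal_def, ← mul_neg_geom_sum]
  refine ((le_div_iff₀' hη0).mpr hbound).trans_eq ?_
  field_simp

theorem kushner_bound_case2 {Ω : Type*} {m0 : MeasurableSpace Ω} {μ : Measure Ω}
    [IsProbabilityMeasure μ] (ℱ : Filtration ℕ m0)
    (B : ℕ → Ω → ℝ)
    (hnonneg : ∀ k ω, 0 ≤ B k ω)
    (hadapted : Adapted ℱ B)
    (hint : ∀ k, Integrable (B k) μ)
    (κ γ α η : ℝ) (hκ0 : 0 < κ) (hκ1 : κ < 1) (hγ : 0 ≤ γ) (hα : 0 ≤ α)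
    (hη0 : 0 < η) (hη : η < γ / (1 - κ))
    (hcond : ∀ k, μ[B (k + 1) | ℱ k] ≤ᵐ[μ] fun ω => κ * B k ω + γ)
    (hB0 : ∀ ω, B 0 ω ≤ α)
    (T : ℕ) :
    (μ {ω | ∃ k ≤ T, η ≤ B k ω}).toReal ≤
      (α / η) * κ ^ T + (γ / ((1 - κ) * η)) * (1 - κ ^ T) :=
  kushner_bound_case2_general ℱ B hnonneg hadapted hint κ γ α η hκ0 hκ1 hγ hη0 hη hcond hB0 T
end

section
/- Let κ₁ > 0, κ₂ ≥ 1, τ > 0, 0 < ε₁ < 1, and q₁, q₂ ∈ ℕ with 1 ≤ q₁ ≤ q₂, and suppose ln(κ₂) − κ₁ τ z < 0 for all integers z with q₁ ≤ z ≤ q₂. Define κ = max{e^{−κ₁τ(1−ε₁)}, e^{−κ₁ τ ε₁ q₁} κ₂}. Then 0 < κ < 1 provided ε₁ q₁ κ₁ τ > ln κ₂, and for every integer z with 0 ≤ z ≤ q₂ − 1 and every B ≥ 0 and γ₁ ≥ 0: e^{κ₁ τ ε₁ (z+1)} · e^{−κ₁τ}(B + τγ₁) ≤ κ · e^{κ₁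 τ ε₁ z} B + e^{κ₁ τ ε₁ q₂} e^{−κ₁ τ} τ γ₁. -/
/-!
Raising the counter from `z` to `z + 1` multiplies the weight `exp (κ₁ τ ε₁ z)` by `exp (κ₁ τ ε₁)`,
so on `B` the flow contracts by `exp (-κ₁ τ (1 - ε₁))`, the first entry of `κ`; the additive
term `τ γ₁` is bounded using the largest weight, at `z = q₂`. The first entry of `κ` is below one
because `ε₁ < 1`, the second exactly when `log κ₂ < ε₁ q₁ κ₁ τ`.
-/

open Real

lemma Real.exp_neg_mul_lt_one_of_log_lt {a c : ℝ} (hc : 0 < c) (h : log c < a) :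
    exp (-a) * c < 1 := by
  rw [← exp_log hc, ← exp_add, exp_lt_one_iff]
  linarith

lemma Real.exp_mul_add_one_mul_exp_neg (a ε z : ℝ) :
    exp (a * ε * (z + 1)) * exp (-a) = exp (-(a * (1 - ε))) * exp (a * ε * z) := by
  rw [← exp_add, ← exp_add]
  ring_nf

lemma exp_mul_flow_step_le {a ε z q κ B g : ℝ} (hs : 0 ≤ a * ε)
    (hκ : exp (-(a * (1 - ε))) ≤ κ) (hz : z + 1 ≤ q) (hB : 0 ≤ B) (hg : 0 ≤ g) :
    exp (a * ε * (z + 1)) * (exp (-a) * (B + g)) ≤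
      κ * (exp (a * ε * z) * B) + exp (a * ε * q) * exp (-a) * g := by
  calc exp (a * ε * (z + 1)) * (exp (-a) * (B + g))
      = exp (-(a * (1 - ε))) * (exp (a * ε * z) * B) + exp (a * ε * (z + 1)) * exp (-a) * g := by
        rw [← mul_assoc, exp_mul_add_one_mul_exp_neg]; ring
    _ ≤ κ * (exp (a * ε * z) * B) + exp (a * ε * q) * exp (-a) * g := by
        gcongr

theorem case2_flow_general (κ₁ κ₂ τ ε₁ : ℝ) (q₁ q₂ : ℕ)
    (hκ₁ : 0 < κ₁) (hκ₂ : 1 ≤ κ₂) (hτ : 0 < τ)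
    (hε₁0 : 0 < ε₁) (hε₁1 : ε₁ < 1) :
    (ε₁ * q₁ * κ₁ * τ > Real.log κ₂ →
      0 < max (Real.exp (-κ₁ * τ * (1 - ε₁))) (Real.exp (-κ₁ * τ * ε₁ * q₁) * κ₂) ∧
      max (Real.exp (-κ₁ * τ * (1 - ε₁))) (Real.exp (-κ₁ * τ * ε₁ * q₁) * κ₂) < 1) ∧
    (∀ z : ℕ, z + 1 ≤ q₂ → ∀ B γ₁ : ℝ, 0 ≤ B → 0 ≤ γ₁ →
      Real.exp (κ₁ * τ * ε₁ * (z + 1)) * (Real.exp (-κ₁ * τ) * (B + τ * γ₁)) ≤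
        max (Real.exp (-κ₁ * τ * (1 - ε₁))) (Real.exp (-κ₁ * τ * ε₁ * q₁) * κ₂) *
          (Real.exp (κ₁ * τ * ε₁ * z) * B) +
        Real.exp (κ₁ * τ * ε₁ * q₂) * Real.exp (-κ₁ * τ) * τ * γ₁) := by
  have ha : 0 < κ₁ * τ := mul_pos hκ₁ hτ
  simp only [neg_mul]
  refine ⟨fun hgt => ⟨lt_max_of_lt_left (exp_pos _), max_lt ?_ ?_⟩,
    fun z hz B γ₁ hB hγ₁ => ?_⟩
  · exact exp_lt_one_iff.2 (neg_neg_of_pos (mul_pos ha (sub_pos.2 hε₁1)))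
  · exact exp_neg_mul_lt_one_of_log_lt (by linarith) (by linarith)
  · have hz' : (z : ℝ) + 1 ≤ q₂ := by exact_mod_cast hz
    have := exp_mul_flow_step_le (mul_pos ha hε₁0).le
      (le_max_left _ (exp (-(κ₁ * τ * ε₁ * q₁)) * κ₂)) hz' hB (mul_nonneg hτ.le hγ₁)
    linarith

theorem case2_flow (κ₁ κ₂ τ ε₁ : ℝ) (q₁ q₂ : ℕ)
    (hκ₁ : 0 < κ₁) (hκ₂ : 1 ≤ κ₂) (hτ : 0 < τ)
    (hε₁0 : 0 < ε₁) (hε₁1 : ε₁ < 1)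
    (hq₁ : 1 ≤ q₁) (hq : q₁ ≤ q₂)
    (hlog : ∀ z : ℕ, q₁ ≤ z → z ≤ q₂ → Real.log κ₂ - κ₁ * τ * z < 0) :
    (ε₁ * q₁ * κ₁ * τ > Real.log κ₂ →
      0 < max (Real.exp (-κ₁ * τ * (1 - ε₁))) (Real.exp (-κ₁ * τ * ε₁ * q₁) * κ₂) ∧
      max (Real.exp (-κ₁ * τ * (1 - ε₁))) (Real.exp (-κ₁ * τ * ε₁ * q₁) * κ₂) < 1) ∧
    (∀ z : ℕ, z + 1 ≤ q₂ → ∀ B γ₁ : ℝ, 0 ≤ B → 0 ≤ γ₁ →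
      Real.exp (κ₁ * τ * ε₁ * (z + 1)) * (Real.exp (-κ₁ * τ) * (B + τ * γ₁)) ≤
        max (Real.exp (-κ₁ * τ * (1 - ε₁))) (Real.exp (-κ₁ * τ * ε₁ * q₁) * κ₂) *
          (Real.exp (κ₁ * τ * ε₁ * z) * B) +
        Real.exp (κ₁ * τ * ε₁ * q₂) * Real.exp (-κ₁ * τ) * τ * γ₁) :=
  case2_flow_general κ₁ κ₂ τ ε₁ q₁ q₂ hκ₁ hκ₂ hτ hε₁0 hε₁1
end
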